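/- arXiv:1511.08070 — 4 statements merged into one kernel-verified Lean document; each statement's English description precedes it below -/
import Mathlib

section
/- The polynomial identity ∑_{j=0}^{k-1} ∑_{1≤i_1<...<i_j≤r} x_{i_1}⋯x_{i_j} ∏_{ℓ∉{i_1,...,i_j}} (1 - x_ℓ) = 1 - ∑_{j=k}^{r} (-1)^{j-k} C(j-1, k-1) e_j(x_1,...,x_r) holds, where e_j denotes the j-th elementary symmetric polynomial and the j = 0 term on the left is ∏_{ℓ=1}^r (1 - x_ℓ). -/
/-!
Expanding `∏_{ℓ ∉ t} (1 - x_ℓ)` gives `x^t ∏_{ℓ ∉ t} (1 - x_ℓ) = ∑_{u ⊇ t} (-1)^{|u|-|t|} x^u`,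
so the terms with `|t| = j` add up to `∑_m (-1)^{m-j} C(m, j) e_m`. Summing over `j < k`, the
coefficient of `e_m` is a partial alternating sum of binomial coefficients, which telescopes
by Pascal's rule to `-(-1)^{m-k} C(m-1, k-1)` for `m ≥ 1`, and is `1` for `m = 0`.
-/

open Finset

section

variable {ι R : Type*}

theorem neg_one_pow_sub_mul_choose [Ring R] (m j : ℕ) :
    (-1 : R) ^ (m - j) * m.choose j = (-1) ^ (m + j) * m.choose j := by
  rcases le_or_gt j m with hjm | hmj
  · obtain ⟨d, rfl⟩ := Nat.exists_eq_add_of_le hjm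
    rw [Nat.add_sub_cancel_left, show j + d + j = d + 2 * j by ring, pow_add, pow_mul]
    simp
  · simp [Nat.choose_eq_zero_of_lt hmj]

theorem sum_range_neg_one_pow_sub_mul_choose_succ [CommRing R] (m k : ℕ) :
    ∑ j ∈ range (k + 1), (-1 : R) ^ (m + 1 - j) * (m + 1).choose j
      = -((-1) ^ (m - k) * m.choose k) := by
  have h := congrArg (Int.cast : ℤ → R) (Int.alternating_sum_range_choose_eq_choose (n := m) (m := k))
  push_cast at h
  simp_rw [neg_one_pow_sub_mul_choose, pow_add, mul_assoc, ← mul_sum, h]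
  ring

section Fintype

variable [Fintype ι] [DecidableEq ι] [CommRing R]

theorem prod_mul_prod_compl_one_sub_eq_sum_Ici (x : ι → R) (t : Finset ι) :
    (∏ i ∈ t, x i) * ∏ i ∈ tᶜ, (1 - x i) = ∑ u ∈ Ici t, (-1) ^ (#u - #t) * ∏ i ∈ u, x i := by
  simp_rw [sub_eq_add_neg, prod_one_add, prod_neg, mul_sum]
  refine sum_nbij' (t ∪ ·) (· \ t) ?_ ?_ ?_ ?_ ?_
  · simp
  · simp [subset_compl_iff_disjoint_left, disjoint_sdiff]
  · intro s hs
    exact union_sdiff_cancel_left (subset_compl_iff_disjoint_left.mp (mem_powerset.mp hs))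
  · intro u hu
    exact union_sdiff_of_subset (mem_Ici.mp hu)
  · intro s hs
    have hts : Disjoint t s := subset_compl_iff_disjoint_left.mp (mem_powerset.mp hs)
    rw [card_union_of_disjoint hts, Nat.add_sub_cancel_left, prod_union hts]
    ring

theorem sum_powersetCard_prod_mul_prod_compl_one_sub (x : ι → R) (j : ℕ) :
    ∑ t ∈ univ.powersetCard j, (∏ i ∈ t, x i) * ∏ i ∈ tᶜ, (1 - x i)
      = ∑ m ∈ range (Fintype.card ι + 1),
          (-1) ^ (m - j) * m.choose j * ∑ u ∈ univ.powersetCard m, ∏ i ∈ u, x i := by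
  simp_rw [prod_mul_prod_compl_one_sub_eq_sum_Ici]
  rw [sum_comm' (t' := univ) (s' := powersetCard j) (by simp [and_comm])]
  have hinner (u : Finset ι) : ∑ t ∈ u.powersetCard j, (-1 : R) ^ (#u - #t) * ∏ i ∈ u, x i
      = (-1) ^ (#u - j) * (#u).choose j * ∏ i ∈ u, x i := by
    rw [sum_congr rfl fun t ht ↦ by rw [(mem_powersetCard.mp ht).2], sum_const,
      card_powersetCard, nsmul_eq_mul]
    ring
  simp_rw [hinner, ← powerset_univ, sum_powerset, card_univ, mul_sum]
  refine sum_congr rfl fun m _ ↦ sum_congr rfl fun u hu ↦ ?_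
  rw [(mem_powersetCard.mp hu).2]

end Fintype

end

theorem sum_indicator_eq_one_sub_esymm_general {R : Type*} [CommRing R] (r k : ℕ)
    (hk : 2 ≤ k) (x : Fin r → R) :
    ∑ j ∈ Finset.range k, ∑ t ∈ Finset.univ.powersetCard j,
        (∏ i ∈ t, x i) * ∏ ℓ ∈ tᶜ, (1 - x ℓ)
      = 1 - ∑ j ∈ Finset.Icc k r, (-1 : R) ^ (j - k) * ((j - 1).choose (k - 1)) *
          ∑ t ∈ Finset.univ.powersetCard j, ∏ i ∈ t, x i := by
  set e : ℕ → R := fun m ↦ ∑ t ∈ univ.powersetCard m, ∏ i ∈ t, x i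
  have he0 : e 0 = 1 := by simp [e]
  -- Truncated subtraction gives `(0 - 1).choose (k - 1) = 0`, which needs `k ≥ 2`.
  have htail : ∑ j ∈ Icc k r, (-1 : R) ^ (j - k) * ((j - 1).choose (k - 1)) * e j
      = ∑ m ∈ range r, (-1 : R) ^ (m + 1 - k) * (m.choose (k - 1)) * e (m + 1) := by
    rw [sum_subset (s₂ := range (r + 1)) (fun j hj ↦ by simp at hj ⊢; omega), sum_range_succ']
    · simp [Nat.choose_eq_zero_of_lt (show 0 < k - 1 by omega)]
    · intro j hj hjk
      simp only [mem_range, mem_Icc, not_and_or, not_le] at hj hjk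
      rw [Nat.choose_eq_zero_of_lt (by omega)]
      simp
  obtain ⟨K, rfl⟩ : ∃ K, k = K + 1 := ⟨k - 1, by omega⟩
  calc _ = ∑ j ∈ range (K + 1), ∑ m ∈ range (r + 1), (-1 : R) ^ (m - j) * m.choose j * e m := by
        simp_rw [sum_powersetCard_prod_mul_prod_compl_one_sub, Fintype.card_fin]
        rfl
    _ = ∑ m ∈ range (r + 1), (∑ j ∈ range (K + 1), (-1 : R) ^ (m - j) * m.choose j) * e m := by
        rw [sum_comm]
        simp_rw [sum_mul]
    _ = _ := by
        have hm0 : ∑ j ∈ range (K + 1), (-1 : R) ^ (0 - j) * (Nat.choose 0 j) = 1 := by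
          simp [sum_range_succ']
        rw [htail, sum_range_succ', he0, hm0]
        simp only [sum_range_neg_one_pow_sub_mul_choose_succ, Nat.add_sub_add_right,
          Nat.add_sub_cancel, neg_mul, sum_neg_distrib]
        ring

/-- Polynomial identity of Lemma 2:
`∑_{j=0}^{k-1} ∑_{i₁<...<i_j} x_{i₁}⋯x_{i_j} ∏_{ℓ∉{i₁,...,i_j}} (1-x_ℓ)
  = 1 - ∑_{j=k}^r (-1)^{j-k} C(j-1,k-1) e_j(x₁,...,x_r)`. -/
theorem sum_indicator_eq_one_sub_esymm {R : Type*} [CommRing R] (r k : ℕ)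
    (hk : 2 ≤ k) (hkr : k ≤ r) (x : Fin r → R) :
    ∑ j ∈ Finset.range k, ∑ t ∈ Finset.univ.powersetCard j,
        (∏ i ∈ t, x i) * ∏ ℓ ∈ tᶜ, (1 - x ℓ)
      = 1 - ∑ j ∈ Finset.Icc k r, (-1 : R) ^ (j - k) * ((j - 1).choose (k - 1)) *
          ∑ t ∈ Finset.univ.powersetCard j, ∏ i ∈ t, x i :=
  sum_indicator_eq_one_sub_esymm_general r k hk x
end

section
/- Define ψ_{r,k} on r-tuples of positive integers as the multiplicative function whose values on prime-power tuples are: ψ_{r,k}(p^{ν_1},...,p^{ν_r}) = 1 if all ν_i = 0; equal to (-1)^{j-k+1} C(j-1,k-1) if all ν_i ∈ {0,1} and j := ν_1+...+ν_r ≥ k; and 0 otherwise. Then for all positive integers n_1,...,n_r, ϱ_{r,k}(n_1,...,n_r) = ∑_{d_1 | n_1, ..., d_r | n_r} ψ_{r,k}(d_1,...,d_r). -/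
/-!
Both sides are multiplicative in the tuple `n` (for the divisor sum because, when `∏ a` and `∏ b`
are coprime, every divisor of `a i * b i` splits uniquely as a divisor of `a i` times one of
`b i`), so it suffices to compare them at `n = (p ^ e₁, …, p ^ e_r)`. There the left side is
`[#T < k]` with `T = {i | eᵢ ≠ 0}`, and the divisor tuples on which `ψ` can be nonzero are the
`p ^ 1_S` with `S ⊆ T`, so the right side is `∑_{S ⊆ T} c_k(#S)`. Pascal's rule gives
`c_{k+1}(j+1) = c_k(j) - c_{k+1}(j)`, so adding a point to `T` turns the sum for `k + 1` into the
sum for `k`, and induction on `T` yields `[#T < k]`.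
-/

open Finset

/-- `c_k(j)`: the value of `ψ_{r,k}(p ^ ν)` at a `0`/`1` exponent tuple `ν` with `∑ ν = j`. -/
def kwiseCoeff (k j : ℕ) : ℤ :=
  if j = 0 then 1 else if k ≤ j then (-1) ^ (j - k + 1) * ((j - 1).choose (k - 1) : ℤ) else 0

lemma kwiseCoeff_succ {k : ℕ} (hk : 0 < k) (j : ℕ) :
    kwiseCoeff k (j + 1) = (-1) ^ (j + k) * (j.choose (k - 1) : ℤ) := by
  rcases lt_or_ge j (k - 1) with h | h
  · simp [kwiseCoeff, Nat.choose_eq_zero_of_lt h, show ¬ k ≤ j + 1 by omega]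
  · have : j + k = j + 1 - k + 1 + 2 * (k - 1) := by omega
    simp [kwiseCoeff, show k ≤ j + 1 by omega, this, pow_add, pow_mul]

lemma kwiseCoeff_one_succ (j : ℕ) : kwiseCoeff 1 (j + 1) = -kwiseCoeff 1 j := by
  cases j <;> simp [kwiseCoeff, pow_succ]

lemma kwiseCoeff_succ_succ (k j : ℕ) :
    kwiseCoeff (k + 2) (j + 1) = kwiseCoeff (k + 1) j - kwiseCoeff (k + 2) j := by
  cases j with
  | zero => simp [kwiseCoeff]
  | succ j =>
    rw [kwiseCoeff_succ (by omega), kwiseCoeff_succ (by omega), kwiseCoeff_succ (by omega),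
      show k + 2 - 1 = k + 1 by omega, Nat.add_sub_cancel, Nat.choose_succ_succ']
    push_cast
    ring

theorem sum_powerset_kwiseCoeff {α : Type*} [DecidableEq α] (T : Finset α) {k : ℕ} (hk : 0 < k) :
    ∑ S ∈ T.powerset, kwiseCoeff k #S = if #T < k then 1 else 0 := by
  induction T using Finset.induction_on generalizing k with
  | empty => simp [kwiseCoeff, hk]
  | insert a T ha ih =>
    have hcard : ∀ S ∈ T.powerset, #(insert a S) = #S + 1 := fun S hS =>
      card_insert_of_notMem fun haS => ha (mem_powerset.1 hS haS)
    rw [sum_powerset_insert ha, sum_congr rfl fun S hS => congrArg _ (hcard S hS),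
      card_insert_of_notMem ha]
    rcases k with _ | _ | k
    · omega
    · simp [kwiseCoeff_one_succ]
    · simp [kwiseCoeff_succ_succ, sum_sub_distrib, ih (Nat.succ_pos k)]

section

variable {ι : Type*}

def KwiseCoprime (k : ℕ) (n : ι → ℕ) : Prop :=
  ∀ s : Finset ι, #s = k → s.gcd n = 1

instance [Fintype ι] (k : ℕ) : DecidablePred (KwiseCoprime (ι := ι) k) := fun n =>
  inferInstanceAs (Decidable (∀ s : Finset ι, #s = k → s.gcd n = 1))

theorem Finset.gcd_mul_eq_one_iff {s : Finset ι} {a b : ι → ℕ}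
    (hab : ∀ i j, (a i).Coprime (b j)) :
    s.gcd (a * b) = 1 ↔ s.gcd a = 1 ∧ s.gcd b = 1 := by
  refine ⟨fun h => ⟨?_, ?_⟩, fun ⟨ha, hb⟩ => ?_⟩
  · exact Nat.dvd_one.1 (h ▸ gcd_mono_fun fun i _ => dvd_mul_right (a i) (b i))
  · exact Nat.dvd_one.1 (h ▸ gcd_mono_fun fun i _ => dvd_mul_left (b i) (a i))
  obtain ⟨i₀, hi₀⟩ : s.Nonempty := nonempty_iff_ne_empty.2 fun hs => by simp [hs] at ha
  set g := s.gcd (a * b)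
  have hg : g ∣ a i₀ * b i₀ := gcd_dvd hi₀
  have hga : g.gcd (a i₀) ∣ s.gcd a := dvd_gcd fun i hi =>
    ((hab i₀ i).coprime_dvd_left (Nat.gcd_dvd_right _ _)).dvd_of_dvd_mul_right
      ((Nat.gcd_dvd_left _ _).trans (gcd_dvd hi))
  have hgb : g.gcd (b i₀) ∣ s.gcd b := dvd_gcd fun i hi =>
    ((hab i i₀).symm.coprime_dvd_left (Nat.gcd_dvd_right _ _)).dvd_of_dvd_mul_left
      ((Nat.gcd_dvd_left _ _).trans (gcd_dvd hi))
  rw [ha, Nat.dvd_one] at hga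
  rw [hb, Nat.dvd_one] at hgb
  rw [← Nat.gcd_eq_left hg, Nat.Coprime.gcd_mul _ (hab i₀ i₀), hga, hgb]

theorem kwiseCoprime_mul_iff {k : ℕ} {a b : ι → ℕ} (hab : ∀ i j, (a i).Coprime (b j)) :
    KwiseCoprime k (a * b) ↔ KwiseCoprime k a ∧ KwiseCoprime k b := by
  simp only [KwiseCoprime, gcd_mul_eq_one_iff hab, imp_and, forall_and]

theorem kwiseCoprime_prime_pow_iff [Fintype ι] [DecidableEq ι] {k p : ℕ} (hp : p.Prime)
    (e : ι → ℕ) : KwiseCoprime k (fun i => p ^ e i) ↔ #{i | e i ≠ 0} < k := by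
  refine ⟨fun h => ?_, fun h s hs => ?_⟩
  · by_contra! hle
    obtain ⟨s, hsT, hs⟩ := exists_subset_card_eq hle
    have hp_dvd : p ∣ s.gcd fun i => p ^ e i :=
      dvd_gcd fun i hi => dvd_pow_self p (mem_filter.1 (hsT hi)).2
    exact hp.not_dvd_one (h s hs ▸ hp_dvd)
  · obtain ⟨i, his, hi⟩ := not_subset.1 fun hsT : s ⊆ univ.filter fun i => e i ≠ 0 => by
      have := card_le_card hsT; omega
    have : (s.gcd fun i => p ^ e i) ∣ p ^ e i := gcd_dvd his
    exact Nat.dvd_one.1 (by simpa [show e i = 0 by simpa using hi] using this)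

def IsTupleMultiplicative [Fintype ι] {R : Type*} [Mul R] (f : (ι → ℕ) → R) : Prop :=
  ∀ m n : ι → ℕ, (∏ i, m i).Coprime (∏ i, n i) → f (m * n) = f m * f n

lemma Nat.Coprime.of_prod_univ [Fintype ι] {a b : ι → ℕ} (h : (∏ i, a i).Coprime (∏ i, b i))
    (i j : ι) : (a i).Coprime (b j) :=
  (h.coprime_dvd_left (dvd_prod_of_mem a (mem_univ i))).coprime_dvd_right
    (dvd_prod_of_mem b (mem_univ j))

theorem isTupleMultiplicative_ite_kwiseCoprime [Fintype ι] (k : ℕ) :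
    IsTupleMultiplicative fun n : ι → ℕ => if KwiseCoprime k n then (1 : ℤ) else 0 := by
  intro m n h
  simp only [kwiseCoprime_mul_iff h.of_prod_univ, ite_and]
  split_ifs <;> simp

theorem IsTupleMultiplicative.sum_divisors [Fintype ι] [DecidableEq ι] {R : Type*} [CommSemiring R]
    {f : (ι → ℕ) → R} (hf : IsTupleMultiplicative f) :
    IsTupleMultiplicative fun n : ι → ℕ => ∑ d ∈ Fintype.piFinset fun i => (n i).divisors, f d := by
  intro a b hab
  have hinj : Set.InjOn (fun x : (ι → ℕ) × (ι → ℕ) => x.1 * x.2)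
      ↑(Fintype.piFinset (fun i => (a i).divisors) ×ˢ Fintype.piFinset fun i => (b i).divisors) := by
    intro x hx y hy hxy
    simp only [coe_product, Set.mem_prod, mem_coe, Fintype.mem_piFinset] at hx hy
    have := fun i => (hab.of_prod_univ i i).mul_injOn_divisors
      (show (x.1 i, x.2 i) ∈ _ from mem_product.2 ⟨hx.1 i, hx.2 i⟩)
      (show (y.1 i, y.2 i) ∈ _ from mem_product.2 ⟨hy.1 i, hy.2 i⟩) (congr_fun hxy i)
    exact Prod.ext (funext fun i => congrArg Prod.fst (this i))
      (funext fun i => congrArg Prod.snd (this i))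
  simp only [Pi.mul_apply, Nat.divisors_mul]
  rw [Fintype.piFinset_mul, mul_def, sum_image hinj, sum_product, sum_mul_sum]
  refine sum_congr rfl fun u hu => sum_congr rfl fun v hv => hf u v ?_
  rw [Fintype.mem_piFinset] at hu hv
  exact (hab.coprime_dvd_left (prod_dvd_prod_of_dvd _ _ fun i _ =>
    Nat.dvd_of_mem_divisors (hu i))).coprime_dvd_right
      (prod_dvd_prod_of_dvd _ _ fun i _ => Nat.dvd_of_mem_divisors (hv i))

theorem IsTupleMultiplicative.eq_of_prime_pow [Fintype ι] {R : Type*} [Mul R]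
    {F G : (ι → ℕ) → R} (hF : IsTupleMultiplicative F) (hG : IsTupleMultiplicative G)
    (h : ∀ p : ℕ, p.Prime → ∀ e : ι → ℕ, F (fun i => p ^ e i) = G (fun i => p ^ e i))
    {n : ι → ℕ} (hn : ∀ i, 0 < n i) : F n = G n := by
  induction hN : ∏ i, n i using Nat.strong_induction_on generalizing n with
  | _ N ih =>
  by_cases h1 : ∏ i, n i = 1
  · obtain rfl : n = fun _ => 1 :=
      funext fun i => by simpa [h1] using dvd_prod_of_mem n (mem_univ i)
    simpa using h 2 Nat.prime_two 0
  obtain ⟨p, hp, hpn⟩ := Nat.exists_prime_and_dvd h1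
  set b := fun i => ordCompl[p] (n i)
  have hsplit : n = (fun i => p ^ (n i).factorization p) * b :=
    funext fun i => (Nat.ordProj_mul_ordCompl_eq_self (n i) p).symm
  have hpb : p.Coprime (∏ i, b i) :=
    Nat.Coprime.prod_right fun i _ => Nat.coprime_ordCompl hp (hn i).ne'
  have hcop : (∏ i, p ^ (n i).factorization p).Coprime (∏ i, b i) := by
    rw [prod_pow_eq_pow_sum]
    exact hpb.pow_left _
  have hlt : ∏ i, b i < N := hN ▸ lt_of_le_of_ne
    (Nat.le_of_dvd (prod_pos fun i _ => hn i)
      (prod_dvd_prod_of_dvd _ _ fun i _ => Nat.ordCompl_dvd (n i) p))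
    fun heq => (Nat.Prime.coprime_iff_not_dvd hp).1 hpb (heq ▸ hpn)
  rw [hsplit, hF _ _ hcop, hG _ _ hcop, h p hp,
    ih _ hlt (fun i => Nat.ordCompl_pos p (hn i).ne') rfl]

theorem sum_piFinset_divisors_prime_pow [Fintype ι] [DecidableEq ι] {R : Type*} [AddCommMonoid R]
    {p : ℕ} (hp : p.Prime) (e : ι → ℕ) (f : (ι → ℕ) → R) :
    ∑ d ∈ Fintype.piFinset (fun i => (p ^ e i).divisors), f d =
      ∑ ν ∈ Fintype.piFinset (fun i => range (e i + 1)), f fun i => p ^ ν i := by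
  simp only [Nat.divisors_prime_pow hp, map_eq_image]
  rw [Fintype.piFinset_image, sum_image]
  · rfl
  · exact fun x _ y _ hxy => funext fun i => Nat.pow_right_injective hp.two_le (congr_fun hxy i)

theorem sum_piFinset_range_ite_forall_le_one [Fintype ι] [DecidableEq ι] {R : Type*}
    [AddCommMonoid R] (e : ι → ℕ) (g : ℕ → R) :
    ∑ ν ∈ Fintype.piFinset (fun i => range (e i + 1)),
        (if ∀ i, ν i ≤ 1 then g (∑ i, ν i) else 0) =
      ∑ S ∈ (univ.filter fun i => e i ≠ 0).powerset, g #S := by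
  rw [← sum_filter]
  symm
  refine sum_nbij' (fun S i => if i ∈ S then 1 else 0) (fun ν => univ.filter fun i => ν i = 1)
    ?_ ?_ ?_ ?_ ?_
  · intro S hS
    simp [subset_iff] at hS ⊢
    grind
  · intro ν hν
    simp [subset_iff] at hν ⊢
    grind
  · intro S _
    ext i
    simp
  · intro ν hν
    simp at hν
    grind
  · intro S _
    simp

end

theorem rho_eq_sum_psi_general (r k : ℕ) (hk : 2 ≤ k)
    (ψ : (Fin r → ℕ) → ℤ)
    (hmul : ∀ m n : Fin r → ℕ, Nat.Coprime (∏ i, m i) (∏ i, n i) →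
      ψ (fun i => m i * n i) = ψ m * ψ n)
    (hpp : ∀ p : ℕ, p.Prime → ∀ ν : Fin r → ℕ,
      ψ (fun i => p ^ ν i) =
        if ∀ i, ν i ≤ 1 then
          (if (∑ i, ν i) = 0 then 1
           else if k ≤ ∑ i, ν i then
             (-1) ^ (∑ i, ν i - k + 1) * (((∑ i, ν i) - 1).choose (k - 1) : ℤ)
           else 0)
        else 0)
    (n : Fin r → ℕ) (hn : ∀ i, 0 < n i) :
    (if ∀ s : Finset (Fin r), s.card = k → s.gcd n = 1 then 1 else 0 : ℤ) =
      ∑ d ∈ Fintype.piFinset (fun i => (n i).divisors), ψ d := by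
  refine (isTupleMultiplicative_ite_kwiseCoprime k).eq_of_prime_pow
    (IsTupleMultiplicative.sum_divisors hmul) (fun p hp e => ?_) hn
  have hψ : ∀ ν : Fin r → ℕ, ψ (fun i => p ^ ν i) =
      if ∀ i, ν i ≤ 1 then kwiseCoeff k (∑ i, ν i) else 0 := hpp p hp
  simp only [kwiseCoprime_prime_pow_iff hp, sum_piFinset_divisors_prime_pow hp, hψ]
  rw [← sum_powerset_kwiseCoeff _ (by omega : 0 < k)]
  -- the two sides differ only in their `Decidable (∀ i, ν i ≤ 1)` instances
  convert (sum_piFinset_range_ite_forall_le_one e (kwiseCoeff k)).symm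

/-- If `ψ` is the multiplicative function of r variables with
`ψ(p^{ν₁},...,p^{ν_r}) = 1` when all `νᵢ = 0`, `= (-1)^{j-k+1} C(j-1,k-1)` when all
`νᵢ ∈ {0,1}` and `j := ν₁+...+ν_r ≥ k`, and `= 0` otherwise, then
`ϱ_{r,k}(n₁,...,n_r) = ∑_{d₁∣n₁,...,d_r∣n_r} ψ(d₁,...,d_r)`. -/
theorem rho_eq_sum_psi (r k : ℕ) (hk : 2 ≤ k) (hkr : k ≤ r)
    (ψ : (Fin r → ℕ) → ℤ)
    (hmul : ∀ m n : Fin r → ℕ, Nat.Coprime (∏ i, m i) (∏ i, n i) →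
      ψ (fun i => m i * n i) = ψ m * ψ n)
    (hpp : ∀ p : ℕ, p.Prime → ∀ ν : Fin r → ℕ,
      ψ (fun i => p ^ ν i) =
        if ∀ i, ν i ≤ 1 then
          (if (∑ i, ν i) = 0 then 1
           else if k ≤ ∑ i, ν i then
             (-1) ^ (∑ i, ν i - k + 1) * (((∑ i, ν i) - 1).choose (k - 1) : ℤ)
           else 0)
        else 0)
    (n : Fin r → ℕ) (hn : ∀ i, 0 < n i) :
    (if ∀ s : Finset (Fin r), s.card = k → s.gcd n = 1 then 1 else 0 : ℤ) =
      ∑ d ∈ Fintype.piFinset (fun i => (n i).divisors), ψ d :=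
  rho_eq_sum_psi_general r k hk ψ hmul hpp n hn
end

section
/- For r ≥ k ≥ 2, the Euler product D_{r,k}(s_1,...,s_r) = ∏_p (1 - ∑_{j=k}^r (-1)^{j-k} C(j-1,k-1) e_j(p^{-s_1},...,p^{-s_r})) converges absolutely whenever Re(s_{i_1} + ... + s_{i_j}) > 1 for every k ≤ j ≤ r and every choice of indices 1 ≤ i_1 < ... < i_j ≤ r. -/
/-- The Euler product `D_{r,k}(s₁,...,s_r)` converges absolutely when
`Re(s_{i₁}+...+s_{i_j}) > 1` for all `k ≤ j ≤ r` and all `i₁ < ... < i_j`. -/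
theorem euler_product_abs_convergent (r k : ℕ) (hk : 2 ≤ k) (hkr : k ≤ r)
    (s : Fin r → ℂ)
    (hs : ∀ j ∈ Finset.Icc k r, ∀ t ∈ (Finset.univ : Finset (Fin r)).powersetCard j,
      1 < (∑ i ∈ t, s i).re) :
    Summable (fun p : Nat.Primes =>
      ‖∑ j ∈ Finset.Icc k r, (-1 : ℂ) ^ (j - k) * ((j - 1).choose (k - 1)) *
        ∑ t ∈ Finset.univ.powersetCard j, ∏ i ∈ t, ((p : ℕ) : ℂ) ^ (-(s i))‖) := by
  have key : ∀ j ∈ Finset.Icc k r, ∀ t ∈ (Finset.univ : Finset (Fin r)).powersetCard j,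
      Summable (fun p : Nat.Primes => ‖∏ i ∈ t, ((p : ℕ) : ℂ) ^ (-(s i))‖) := by
    intro j hj t ht
    have hσ := hs j hj t ht
    have heq : ∀ p : Nat.Primes,
        ‖∏ i ∈ t, ((p : ℕ) : ℂ) ^ (-(s i))‖ = ((p : ℕ) : ℝ) ^ (-(∑ i ∈ t, s i).re) := by
      intro p
      have hp : 0 < (p : ℕ) := p.2.pos
      have hp' : (0 : ℝ) < ((p : ℕ) : ℝ) := by exact_mod_cast hp
      rw [norm_prod]
      calc ∏ i ∈ t, ‖((p : ℕ) : ℂ) ^ (-(s i))‖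
          = ∏ i ∈ t, ((p : ℕ) : ℝ) ^ (-(s i)).re := by
            refine Finset.prod_congr rfl fun i _ => ?_
            exact Complex.norm_natCast_cpow_of_pos hp _
        _ = ((p : ℕ) : ℝ) ^ (∑ i ∈ t, (-(s i)).re) := by
            rw [← Real.rpow_sum_of_pos hp' _ t]
        _ = ((p : ℕ) : ℝ) ^ (-(∑ i ∈ t, s i).re) := by
            congr 1
            simp [Complex.re_sum]
    rw [funext heq]
    have : Summable (fun n : ℕ => (n : ℝ) ^ (-(∑ i ∈ t, s i).re)) :=
      (Real.summable_nat_rpow).2 (by linarith)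
    exact this.subtype _
  have hdom : Summable (fun p : Nat.Primes =>
      ∑ j ∈ Finset.Icc k r, ((j - 1).choose (k - 1) : ℝ) *
        ∑ t ∈ (Finset.univ : Finset (Fin r)).powersetCard j,
          ‖∏ i ∈ t, ((p : ℕ) : ℂ) ^ (-(s i))‖) := by
    refine summable_sum fun j hj => ?_
    exact ((summable_sum fun t ht => key j hj t ht).mul_left _)
  refine hdom.of_nonneg_of_le (fun p => norm_nonneg _) fun p => ?_
  refine (norm_sum_le _ _).trans (Finset.sum_le_sum fun j hj => ?_)
  rw [norm_mul, norm_mul, norm_pow, norm_neg, norm_one, one_pow, one_mul]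
  rw [Complex.norm_natCast]
  exact mul_le_mul_of_nonneg_left (norm_sum_le _ _) (by positivity)
end

section
/- Let ψ_{r,k} (k ≥ 3) be the multiplicative function of r variables with ψ_{r,k}(p^{ν_1},...,p^{ν_r}) equal to 1 if all ν_i = 0, to (-1)^{j-k+1} C(j-1,k-1) if all ν_i ∈ {0,1} with j := ν_1+...+ν_r ≥ k, and to 0 otherwise. Then the series ∑_{d_1,...,d_r ≥ 1} |ψ_{r,k}(d_1,...,d_r)| / (d_1 ⋯ d_{r-1}) converges (i.e., the sum omitting the variable d_r from the denominator is finite). -/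
private lemma aux_choose_le_two_pow (n m : ℕ) : n.choose m ≤ 2 ^ n := by
  rcases le_or_gt m n with h | h
  · calc n.choose m ≤ ∑ j ∈ Finset.range (n + 1), n.choose j :=
        Finset.single_le_sum (fun j _ => Nat.zero_le _)
          (Finset.mem_range.mpr (Nat.lt_succ_of_le h))
    _ = 2 ^ n := Nat.sum_range_choose n
  · rw [Nat.choose_eq_zero_of_lt h]; exact Nat.zero_le _

private lemma aux_prod_pow_dvd {s : Finset ℕ} (hs : ∀ p ∈ s, p.Prime) (e D : ℕ)
    (h : ∀ p ∈ s, p ^ e ∣ D) : (∏ p ∈ s, p ^ e) ∣ D := by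
  classical
  induction s using Finset.induction_on with
  | empty => simpa using one_dvd D
  | @insert p s hps ih =>
    rw [Finset.prod_insert hps]
    refine Nat.Coprime.mul_dvd_of_dvd_of_dvd ?_ (h p (Finset.mem_insert_self p s))
      (ih (fun q hq => hs q (Finset.mem_insert_of_mem hq))
        (fun q hq => h q (Finset.mem_insert_of_mem hq)))
    refine Nat.Coprime.pow_left _ (Nat.Coprime.prod_right fun q hq => ?_)
    exact Nat.Coprime.pow_right _
      ((Nat.coprime_primes (hs p (Finset.mem_insert_self p s))
        (hs q (Finset.mem_insert_of_mem hq))).mpr (fun hpq => hps (hpq ▸ hq)))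

private lemma aux_squarefree_prod {s : Finset ℕ} (hs : ∀ p ∈ s, p.Prime) :
    Squarefree (∏ p ∈ s, p) := by
  classical
  induction s using Finset.induction_on with
  | empty => simpa using squarefree_one
  | @insert p s hps ih =>
    rw [Finset.prod_insert hps]
    have hp := hs p (Finset.mem_insert_self p s)
    have hcop : Nat.Coprime p (∏ q ∈ s, q) :=
      Nat.Coprime.prod_right fun q hq =>
        (Nat.coprime_primes hp (hs q (Finset.mem_insert_of_mem hq))).mpr
          (fun h => hps (h ▸ hq))
    exact (Nat.squarefree_mul hcop).mpr
      ⟨hp.squarefree, ih fun q hq => hs q (Finset.mem_insert_of_mem hq)⟩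

/-- `c^{ω} ≤ c^c * q` where `q` is the product of the distinct primes in `s`. -/
private lemma aux_pow_card_le {s : Finset ℕ} (hs : ∀ p ∈ s, p.Prime) (c : ℕ) (hc : 1 ≤ c) :
    c ^ s.card ≤ c ^ c * ∏ p ∈ s, p := by
  classical
  have hsplit : c ^ s.card = (∏ p ∈ s.filter (· < c), c) * ∏ p ∈ s.filter (¬ · < c), c := by
    rw [Finset.prod_filter_mul_prod_filter_not s (· < c) (fun _ => c), Finset.prod_const]
  rw [hsplit]
  have h1 : (∏ p ∈ s.filter (· < c), c) ≤ c ^ c := by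
    rw [Finset.prod_const]
    apply Nat.pow_le_pow_right hc
    calc (s.filter (· < c)).card ≤ (Finset.range c).card := by
          apply Finset.card_le_card
          intro p hp
          exact Finset.mem_range.mpr (Finset.mem_filter.mp hp).2
      _ = c := Finset.card_range c
  have h2 : (∏ p ∈ s.filter (¬ · < c), c) ≤ ∏ p ∈ s, p := by
    calc (∏ p ∈ s.filter (¬ · < c), c) ≤ ∏ p ∈ s.filter (¬ · < c), p :=
          Finset.prod_le_prod' fun p hp => le_of_not_gt (Finset.mem_filter.mp hp).2
      _ ≤ ∏ p ∈ s, p := by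
          apply Nat.le_of_dvd
          · exact Finset.prod_pos fun p hp => (hs p hp).pos
          · exact Finset.prod_dvd_prod_of_subset _ _ _ (Finset.filter_subset _ _)
  exact Nat.mul_le_mul h1 h2

/-- For `k ≥ 3`, the series `∑_{d₁,...,d_r ≥ 1} |ψ_{r,k}(d₁,...,d_r)|/(d₁⋯d_{r-1})`,
omitting the last variable from the denominator, converges. -/
theorem psi_r_k_series_summable (r k : ℕ) (hk : 3 ≤ k) (hkr : k ≤ r)
    (ψ : (Fin r → ℕ) → ℤ)
    (hmul : ∀ m n : Fin r → ℕ, Nat.Coprime (∏ i, m i) (∏ i, n i) →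
      ψ (fun i => m i * n i) = ψ m * ψ n)
    (hpp : ∀ p : ℕ, p.Prime → ∀ ν : Fin r → ℕ,
      ψ (fun i => p ^ ν i) =
        if ∀ i, ν i ≤ 1 then
          (if (∑ i, ν i) = 0 then 1
           else if k ≤ ∑ i, ν i then
             (-1) ^ (∑ i, ν i - k + 1) * (((∑ i, ν i) - 1).choose (k - 1) : ℤ)
           else 0)
        else 0) :
    Summable (fun d : Fin r → ℕ+ =>
      (|ψ (fun i => (d i : ℕ))| : ℝ) /
        ∏ i ∈ Finset.univ.filter (fun i : Fin r => (i : ℕ) < r - 1), ((d i : ℕ) : ℝ)) := by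
  classical
  -- ψ at the all-ones tuple
  have hone : ψ (fun _ => 1) = 1 := by
    have h := hpp 2 Nat.prime_two (fun _ => 0)
    simpa using h
  -- splitting off the p-part
  have hsplit : ∀ p : ℕ, p.Prime → ∀ d : Fin r → ℕ, (∀ i, d i ≠ 0) →
      ψ d = ψ (fun i => p ^ (d i).factorization p) *
        ψ (fun i => d i / p ^ (d i).factorization p) := by
    intro p hp d hd
    have hcop : Nat.Coprime (∏ i, p ^ (d i).factorization p)
        (∏ i, d i / p ^ (d i).factorization p) := by
      rw [Finset.prod_pow_eq_pow_sum]
      refine Nat.Coprime.pow_left _ ?_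
      rw [Nat.Prime.coprime_iff_not_dvd hp]
      intro hdvd
      obtain ⟨i, -, hi⟩ := (Prime.dvd_finset_prod_iff hp.prime _).mp hdvd
      exact Nat.not_dvd_ordCompl hp (hd i) hi
    have h := hmul _ _ hcop
    rw [← h]
    congr 1
    funext i
    exact (Nat.ordProj_mul_ordCompl_eq_self (d i) p).symm
  -- squarefree components
  have hsf : ∀ d : Fin r → ℕ, (∀ i, d i ≠ 0) → ψ d ≠ 0 → ∀ i, Squarefree (d i) := by
    intro d hd hψ i
    rw [Nat.squarefree_iff_prime_squarefree]
    intro p hp hsq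
    apply hψ
    rw [hsplit p hp d hd]
    have hν := hpp p hp (fun i => (d i).factorization p)
    rw [hν, if_neg, zero_mul]
    push_neg
    refine ⟨i, ?_⟩
    have h2 : 2 ≤ (d i).factorization p := by
      rw [← Nat.Prime.pow_dvd_iff_le_factorization hp (hd i)]
      simpa [pow_two] using hsq
    omega
  -- prime multiplicity at least k
  have hcount : ∀ d : Fin r → ℕ, (∀ i, d i ≠ 0) → ψ d ≠ 0 → ∀ p : ℕ, p.Prime →
      p ∣ ∏ i, d i → k ≤ ∑ i, (d i).factorization p := by
    intro d hd hψ p hp hdvd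
    by_contra hlt
    push_neg at hlt
    apply hψ
    rw [hsplit p hp d hd]
    have hν := hpp p hp (fun i => (d i).factorization p)
    have hsum : ∑ i, (d i).factorization p = (∏ i, d i).factorization p := by
      rw [Nat.factorization_prod fun i _ => hd i]
      exact (Finset.sum_apply' p).symm
    have hpos : 0 < (∏ i, d i).factorization p :=
      Nat.Prime.factorization_pos_of_dvd hp (Finset.prod_ne_zero_iff.mpr fun i _ => hd i) hdvd
    rw [hν, if_pos fun i => (hsf d hd hψ i).natFactorization_le_one p,
      if_neg (by omega), if_neg (by omega), zero_mul]
  -- bound |ψ d| ≤ 2^(r ω)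
  have hbound : ∀ N : ℕ, ∀ d : Fin r → ℕ, (∀ i, d i ≠ 0) → ∏ i, d i = N →
      |ψ d| ≤ (2 : ℤ) ^ (r * N.primeFactors.card) := by
    intro N
    induction N using Nat.strong_induction_on with
    | _ N ih =>
      intro d hd hprod
      have hN0 : N ≠ 0 := hprod ▸ Finset.prod_ne_zero_iff.mpr fun i _ => hd i
      rcases eq_or_ne N 1 with hN1 | hN1
      · have hd1 : d = fun _ => 1 := by
          funext i
          exact Nat.dvd_one.mp (hN1 ▸ hprod ▸ Finset.dvd_prod_of_mem d (Finset.mem_univ i))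
        rw [hd1, hone]
        simpa using one_le_pow₀ (by norm_num : (1:ℤ) ≤ 2)
      · set p := N.minFac with hpdef
        have hp : p.Prime := Nat.minFac_prime hN1
        have hpN : p ∣ N := N.minFac_dvd
        have hppf : p ∈ N.primeFactors := Nat.mem_primeFactors.mpr ⟨hp, hpN, hN0⟩
        set v : Fin r → ℕ := fun i => (d i).factorization p with hv
        set m : Fin r → ℕ := fun i => d i / p ^ v i with hm
        have hm0 : ∀ i, m i ≠ 0 := fun i => (Nat.ordCompl_pos p (hd i)).ne'
        have hsum : ∑ i, v i = N.factorization p := by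
          rw [← hprod, Nat.factorization_prod fun i _ => hd i]
          exact (Finset.sum_apply' p).symm
        have hmain : p ^ N.factorization p * ∏ i, m i = N := by
          rw [← hsum, ← Finset.prod_pow_eq_pow_sum, ← Finset.prod_mul_distrib, ← hprod]
          exact Finset.prod_congr rfl fun i _ =>
            Nat.ordProj_mul_ordCompl_eq_self (d i) p
        have he : 0 < N.factorization p := Nat.Prime.factorization_pos_of_dvd hp hN0 hpN
        have hprodm : ∏ i, m i = N / p ^ N.factorization p :=
          (Nat.div_eq_of_eq_mul_right (pow_pos hp.pos _) hmain.symm).symm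
        have hltm : N / p ^ N.factorization p < N := by
          apply Nat.div_lt_self (Nat.pos_of_ne_zero hN0)
          exact Nat.one_lt_pow he.ne' hp.one_lt
        have hih : |ψ m| ≤ (2 : ℤ) ^ (r * (N / p ^ N.factorization p).primeFactors.card) :=
          ih _ hltm m hm0 hprodm
        -- ω of the complement
        have homega : (N / p ^ N.factorization p).primeFactors.card
            = N.primeFactors.card - 1 := by
          have h1 : (N / p ^ N.factorization p).factorization = N.factorization.erase p :=
            Nat.factorization_ordCompl N p
          rw [← Nat.support_factorization, h1, Finsupp.support_erase,
            Nat.support_factorization]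
          exact Finset.card_erase_of_mem hppf
        have hcard1 : 1 ≤ N.primeFactors.card :=
          Finset.card_pos.mpr ⟨p, hppf⟩ 
        -- bound on the p-part
        have habs : |ψ (fun i => p ^ v i)| ≤ (2 : ℤ) ^ r := by
          have hν := hpp p hp v
          rw [hν]
          split_ifs with h1 h2 h3
          · simpa using one_le_pow₀ (by norm_num : (1:ℤ) ≤ 2)
          · rw [abs_mul, abs_pow, abs_neg, abs_one, one_pow, one_mul]
            have hsr : ∑ i, v i ≤ r := by
              calc ∑ i, v i ≤ ∑ _i : Fin r, 1 := Finset.sum_le_sum fun i _ => h1 i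
              _ = r := by simp
            have hch : ((∑ i, v i - 1).choose (k - 1)) ≤ 2 ^ r :=
              le_trans (aux_choose_le_two_pow _ _)
                (Nat.pow_le_pow_right (by norm_num) (by omega))
            calc |((((∑ i, v i) - 1).choose (k - 1) : ℕ) : ℤ)|
                = (((∑ i, v i - 1).choose (k - 1) : ℕ) : ℤ) := abs_of_nonneg (Int.natCast_nonneg _)
              _ ≤ ((2 ^ r : ℕ) : ℤ) := Int.ofNat_le.mpr hch
              _ = (2 : ℤ) ^ r := by push_cast; ring
          · simpa using one_le_pow₀ (by norm_num : (1:ℤ) ≤ 2)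
          · simpa using one_le_pow₀ (by norm_num : (1:ℤ) ≤ 2)
        rw [hsplit p hp d hd, abs_mul]
        calc |ψ fun i => p ^ (d i).factorization p| * |ψ fun i => d i / p ^ (d i).factorization p|
            ≤ (2 : ℤ) ^ r * (2 : ℤ) ^ (r * (N / p ^ N.factorization p).primeFactors.card) :=
              mul_le_mul habs hih (abs_nonneg _) (by positivity)
          _ = (2 : ℤ) ^ (r * N.primeFactors.card) := by
              rw [← pow_add, homega]
              congr 1
              obtain ⟨w', hw'⟩ := Nat.exists_eq_add_of_le hcard1
              rw [hw', Nat.add_sub_cancel_left]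
              ring
  -- notation
  set F : Finset (Fin r) := Finset.univ.filter (fun i : Fin r => (i : ℕ) < r - 1) with hF
  set t : (Fin r → ℕ+) → ℝ := fun d =>
    (|ψ (fun i => (d i : ℕ))| : ℝ) / ∏ i ∈ F, ((d i : ℕ) : ℝ) with ht
  have ht0 : ∀ d : Fin r → ℕ+, 0 ≤ t d := by
    intro d
    apply div_nonneg
    · exact_mod_cast abs_nonneg _
    · exact Finset.prod_nonneg fun i _ => by positivity
  set c : ℕ := 16 ^ r with hc
  have hc1 : 1 ≤ c := Nat.one_le_pow _ _ (by norm_num)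
  set C₀ : ℝ := Real.sqrt ((c : ℝ) ^ c) with hC0
  have hC0nn : 0 ≤ C₀ := Real.sqrt_nonneg _
  set h : ℕ → ℝ := fun n => Real.sqrt n / (n : ℝ) ^ 2 with hh
  have hhnn : ∀ n, 0 ≤ h n := fun n => by
    apply div_nonneg (Real.sqrt_nonneg _) (by positivity)
  have hhsum : Summable h := by
    refine Summable.of_nonneg_of_le (f := fun n : ℕ => 1 / (n : ℝ) ^ ((3 : ℝ)/2)) hhnn ?_ ?_
    · intro n
      rcases Nat.eq_zero_or_pos n with rfl | hn
      · simp [hh, Real.zero_rpow]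
      · have hn0 : (0 : ℝ) < n := by exact_mod_cast hn
        rw [hh]
        rw [div_le_div_iff₀ (by positivity) (by positivity), one_mul]
        have key : Real.sqrt n * (n : ℝ) ^ ((3 : ℝ)/2) = (n : ℝ) ^ ((2 : ℕ) : ℝ) := by
          rw [Real.sqrt_eq_rpow, ← Real.rpow_add hn0]
          norm_num
        rw [key, Real.rpow_natCast]
    · exact Real.summable_one_div_nat_rpow.mpr (by norm_num)
  -- the radical map
  set Φ : (Fin r → ℕ+) → ℕ := fun d => ∏ p ∈ (∏ i, ((d i) : ℕ)).primeFactors, p with hΦ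
  apply summable_of_sum_le (c := C₀ * ∑' n, h n) ht0
  intro u
  -- restrict to the support of ψ
  set u' : Finset (Fin r → ℕ+) := u.filter (fun d => ψ (fun i => (d i : ℕ)) ≠ 0) with hu'
  have hstep1 : ∑ d ∈ u, t d = ∑ d ∈ u', t d := by
    rw [hu']
    refine (Finset.sum_filter_of_ne ?_).symm
    intro d _ hne h0
    apply hne
    rw [ht]
    simp only [h0, abs_zero, Int.cast_zero, zero_div]
  rw [hstep1]
  have hmaps : ∀ d ∈ u', Φ d ∈ u'.image Φ := fun d hd => Finset.mem_image_of_mem Φ hd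
  rw [← Finset.sum_fiberwise_of_maps_to hmaps t]
  -- the per-fiber bound
  have hfiber : ∀ q ∈ u'.image Φ,
      ∑ d ∈ u'.filter (fun d => Φ d = q), t d ≤ C₀ * h q := by
    intro q hq
    obtain ⟨d₀, hd₀u, hΦd₀⟩ := Finset.mem_image.mp hq
    have hsprime : ∀ p ∈ (∏ i, ((d₀ i) : ℕ)).primeFactors, p.Prime :=
      fun p hp => Nat.prime_of_mem_primeFactors hp
    have hqdef : q = ∏ p ∈ (∏ i, ((d₀ i) : ℕ)).primeFactors, p := hΦd₀.symm
    have hq0 : 0 < q := hqdef ▸ Finset.prod_pos fun p hp => (hsprime p hp).pos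
    have hqsf : Squarefree q := hqdef ▸ aux_squarefree_prod hsprime
    have hqs : q.primeFactors = (∏ i, ((d₀ i) : ℕ)).primeFactors :=
      hqdef ▸ Nat.primeFactors_prod hsprime
    set w : ℕ := q.primeFactors.card with hw
    -- number of divisors of q
    have hτ : q.divisors.card = 2 ^ w := by
      rw [Nat.card_divisors hq0.ne']
      have h2 : ∀ p ∈ q.primeFactors, q.factorization p + 1 = 2 := by
        intro p hp
        have hple := hqsf.natFactorization_le_one p
        have hppos : 0 < q.factorization p :=
          Nat.Prime.factorization_pos_of_dvd (Nat.prime_of_mem_primeFactors hp)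
            hq0.ne' (Nat.dvd_of_mem_primeFactors hp)
        omega
      rw [Finset.prod_congr rfl h2, Finset.prod_const, hw]
    -- facts for every member of the fiber
    have hkey : ∀ d ∈ u'.filter (fun d => Φ d = q),
        t d ≤ (2:ℝ) ^ (r * w) / (q:ℝ) ^ 2 := by
      intro d hd
      obtain ⟨hdu', hΦd⟩ := Finset.mem_filter.mp hd
      have hψd : ψ (fun i => (d i : ℕ)) ≠ 0 := (Finset.mem_filter.mp hdu').2
      have hd0 : ∀ i, ((d i : ℕ)) ≠ 0 := fun i => (d i).pos.ne'
      have hN0 : (∏ i, ((d i) : ℕ)) ≠ 0 := Finset.prod_ne_zero_iff.mpr fun i _ => hd0 i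
      have hNpf : (∏ i, ((d i) : ℕ)).primeFactors = q.primeFactors := by
        have : q = ∏ p ∈ (∏ i, ((d i) : ℕ)).primeFactors, p := hΦd.symm
        rw [this, Nat.primeFactors_prod fun p hp => Nat.prime_of_mem_primeFactors hp]
      -- numerator bound
      have hnum : (|ψ (fun i => (d i : ℕ))| : ℝ) ≤ (2:ℝ) ^ (r * w) := by
        have := hbound _ (fun i => (d i : ℕ)) hd0 rfl
        rw [hNpf] at this
        calc (|ψ (fun i => (d i : ℕ))| : ℝ) ≤ (((2:ℤ) ^ (r * w) : ℤ) : ℝ) := by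
              exact_mod_cast this
        _ = (2:ℝ) ^ (r * w) := by push_cast; ring
      -- denominator bound
      have hdvdD : q ^ 2 ∣ ∏ i ∈ F, ((d i) : ℕ) := by
        have hq2 : q ^ 2 = ∏ p ∈ q.primeFactors, p ^ 2 := by
          conv_lhs => rw [← Nat.prod_primeFactors_of_squarefree hqsf]
          rw [Finset.prod_pow]
        rw [hq2]
        refine aux_prod_pow_dvd (fun p hp => Nat.prime_of_mem_primeFactors hp) 2 _ ?_
        intro p hp
        have hpp' : p.Prime := Nat.prime_of_mem_primeFactors hp
        have hpdvd : p ∣ ∏ i, ((d i) : ℕ) :=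
          Nat.dvd_of_mem_primeFactors (hNpf ▸ hp)
        have hck : k ≤ ∑ i, ((d i : ℕ)).factorization p :=
          hcount _ hd0 hψd p hpp' hpdvd
        have hv1 : ∀ i, ((d i : ℕ)).factorization p ≤ 1 :=
          fun i => (hsf _ hd0 hψd i).natFactorization_le_one p
        have hcompl : ∑ i ∈ Finset.univ.filter (fun i : Fin r => ¬ ((i : ℕ) < r - 1)),
            ((d i : ℕ)).factorization p ≤ 1 := by
          have hsub : Finset.univ.filter (fun i : Fin r => ¬ ((i : ℕ) < r - 1)) ⊆
              {(⟨r - 1, by omega⟩ : Fin r)} := by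
            intro i hi
            have := (Finset.mem_filter.mp hi).2
            have hir : (i : ℕ) < r := i.isLt
            rw [Finset.mem_singleton]
            exact Fin.ext (show (i : ℕ) = r - 1 by omega)
          calc ∑ i ∈ Finset.univ.filter (fun i : Fin r => ¬ ((i : ℕ) < r - 1)),
              ((d i : ℕ)).factorization p
              ≤ ∑ i ∈ {(⟨r - 1, by omega⟩ : Fin r)}, ((d i : ℕ)).factorization p :=
                Finset.sum_le_sum_of_subset hsub
          _ ≤ 1 := by rw [Finset.sum_singleton]; exact hv1 _
        have hFsum : 2 ≤ ∑ i ∈ F, ((d i : ℕ)).factorization p := by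
          have htot := Finset.sum_filter_add_sum_filter_not Finset.univ
            (fun i : Fin r => (i : ℕ) < r - 1) (fun i => ((d i : ℕ)).factorization p)
          rw [← hF] at htot
          have hck' : k ≤ (∑ i ∈ F, ((d i : ℕ)).factorization p) +
              ∑ i ∈ Finset.univ.filter (fun i : Fin r => ¬ ((i : ℕ) < r - 1)),
                ((d i : ℕ)).factorization p := by
            rw [htot]; exact hck
          omega
        calc p ^ 2 ∣ p ^ (∑ i ∈ F, ((d i : ℕ)).factorization p) := pow_dvd_pow p hFsum
        _ = ∏ i ∈ F, p ^ ((d i : ℕ)).factorization p :=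
              (Finset.prod_pow_eq_pow_sum F _ p).symm
        _ ∣ ∏ i ∈ F, ((d i) : ℕ) :=
              Finset.prod_dvd_prod_of_dvd _ _ fun i _ => Nat.ordProj_dvd _ p
      have hDpos : 0 < ∏ i ∈ F, ((d i) : ℕ) :=
        Finset.prod_pos fun i _ => (d i).pos
      have hden : (q:ℝ) ^ 2 ≤ ∏ i ∈ F, (((d i) : ℕ) : ℝ) := by
        have := Nat.le_of_dvd hDpos hdvdD
        calc (q:ℝ) ^ 2 = ((q ^ 2 : ℕ) : ℝ) := by push_cast; ring
        _ ≤ ((∏ i ∈ F, ((d i) : ℕ) : ℕ) : ℝ) := by exact_mod_cast this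
        _ = ∏ i ∈ F, (((d i) : ℕ) : ℝ) := by push_cast; ring
      rw [ht]
      exact div_le_div₀ (by positivity) hnum (by positivity) hden
    -- cardinality of the fiber
    have hcard : (u'.filter (fun d => Φ d = q)).card ≤ 2 ^ (r * w) := by
      have hinj : Set.InjOn (fun (d : Fin r → ℕ+) => fun i => ((d i) : ℕ))
          ↑(u'.filter (fun d => Φ d = q)) := by
        intro a _ b _ hab
        funext i
        exact PNat.coe_injective (congrFun hab i)
      have hmapsto : ∀ d ∈ u'.filter (fun d => Φ d = q),
          (fun i => ((d i) : ℕ)) ∈ Fintype.piFinset (fun _ : Fin r => q.divisors) := by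
        intro d hd
        obtain ⟨hdu', hΦd⟩ := Finset.mem_filter.mp hd
        have hψd : ψ (fun i => (d i : ℕ)) ≠ 0 := (Finset.mem_filter.mp hdu').2
        have hd0 : ∀ i, ((d i : ℕ)) ≠ 0 := fun i => (d i).pos.ne'
        have hN0 : (∏ i, ((d i) : ℕ)) ≠ 0 := Finset.prod_ne_zero_iff.mpr fun i _ => hd0 i
        have hNpf : (∏ i, ((d i) : ℕ)).primeFactors = q.primeFactors := by
          have : q = ∏ p ∈ (∏ i, ((d i) : ℕ)).primeFactors, p := hΦd.symm
          rw [this, Nat.primeFactors_prod fun p hp => Nat.prime_of_mem_primeFactors hp]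
        rw [Fintype.mem_piFinset]
        intro i
        rw [Nat.mem_divisors]
        refine ⟨?_, hq0.ne'⟩
        have hsfi : Squarefree ((d i : ℕ)) := hsf _ hd0 hψd i
        have hsub : ((d i : ℕ)).primeFactors ⊆ q.primeFactors := by
          rw [← hNpf]
          exact Nat.primeFactors_mono (Finset.dvd_prod_of_mem _ (Finset.mem_univ i)) hN0
        calc ((d i) : ℕ) = ∏ p ∈ ((d i : ℕ)).primeFactors, p :=
              (Nat.prod_primeFactors_of_squarefree hsfi).symm
        _ ∣ ∏ p ∈ q.primeFactors, p :=
              Finset.prod_dvd_prod_of_subset _ _ _ hsub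
        _ = q := Nat.prod_primeFactors_of_squarefree hqsf
      calc (u'.filter (fun d => Φ d = q)).card
          ≤ (Fintype.piFinset (fun _ : Fin r => q.divisors)).card :=
            Finset.card_le_card_of_injOn _ hmapsto hinj
      _ = (2 ^ w) ^ r := by
            rw [Fintype.card_piFinset]
            rw [Finset.prod_congr rfl (g := fun _ => 2 ^ w) (fun _ _ => hτ),
              Finset.prod_const, Finset.card_univ, Fintype.card_fin]
      _ = 2 ^ (r * w) := by rw [← pow_mul, mul_comm]
    -- combine
    have hsum_fiber : ∑ d ∈ u'.filter (fun d => Φ d = q), t d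
        ≤ ((2:ℝ) ^ (r * w)) * ((2:ℝ) ^ (r * w) / (q:ℝ) ^ 2) := by
      calc ∑ d ∈ u'.filter (fun d => Φ d = q), t d
          ≤ (u'.filter (fun d => Φ d = q)).card • ((2:ℝ) ^ (r * w) / (q:ℝ) ^ 2) :=
            Finset.sum_le_card_nsmul _ _ _ hkey
      _ = ((u'.filter (fun d => Φ d = q)).card : ℝ) * ((2:ℝ) ^ (r * w) / (q:ℝ) ^ 2) :=
            nsmul_eq_mul _ _
      _ ≤ ((2:ℝ) ^ (r * w)) * ((2:ℝ) ^ (r * w) / (q:ℝ) ^ 2) := by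
            apply mul_le_mul_of_nonneg_right _ (by positivity)
            calc ((u'.filter (fun d => Φ d = q)).card : ℝ) ≤ ((2 ^ (r * w) : ℕ) : ℝ) := by
                  exact_mod_cast hcard
            _ = (2:ℝ) ^ (r * w) := by push_cast; ring
    refine hsum_fiber.trans ?_
    -- the analytic bound: (2^{rw})² ≤ C₀ √q
    have hnat : c ^ w ≤ c ^ c * q := by
      have := aux_pow_card_le (s := q.primeFactors)
        (fun p hp => Nat.prime_of_mem_primeFactors hp) c hc1
      rwa [Nat.prod_primeFactors_of_squarefree hqsf, ← hw] at this
    have hA : ((2 ^ (r * w) : ℕ) ^ 2) ^ 2 = c ^ w := by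
      rw [hc, show (16:ℕ) = 2 ^ 4 by norm_num, ← pow_mul, ← pow_mul, ← pow_mul, ← pow_mul]
      congr 1
      ring
    have hsq : ((2:ℝ) ^ (r * w)) ^ 2 ≤ C₀ * Real.sqrt q := by
      have hstep : ((((2:ℝ) ^ (r * w)) ^ 2) ^ 2) ≤ (c:ℝ) ^ c * q := by
        calc ((((2:ℝ) ^ (r * w)) ^ 2) ^ 2) = (((((2:ℕ) ^ (r * w)) ^ 2) ^ 2 : ℕ) : ℝ) := by
              push_cast; ring
        _ = ((c ^ w : ℕ) : ℝ) := by rw [hA]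
        _ ≤ ((c ^ c * q : ℕ) : ℝ) := by exact_mod_cast hnat
        _ = (c:ℝ) ^ c * q := by push_cast; ring
      calc ((2:ℝ) ^ (r * w)) ^ 2 = Real.sqrt ((((2:ℝ) ^ (r * w)) ^ 2) ^ 2) :=
            (Real.sqrt_sq (by positivity)).symm
      _ ≤ Real.sqrt ((c:ℝ) ^ c * q) := Real.sqrt_le_sqrt hstep
      _ = C₀ * Real.sqrt q := by
            rw [Real.sqrt_mul (by positivity), hC0]
    calc ((2:ℝ) ^ (r * w)) * ((2:ℝ) ^ (r * w) / (q:ℝ) ^ 2)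
        = (((2:ℝ) ^ (r * w)) ^ 2) / (q:ℝ) ^ 2 := by ring
    _ ≤ (C₀ * Real.sqrt q) / (q:ℝ) ^ 2 :=
          div_le_div₀ (by positivity) hsq (by positivity) le_rfl
    _ = C₀ * h q := by rw [hh]; ring
  calc ∑ q ∈ u'.image Φ, ∑ d ∈ u'.filter (fun d => Φ d = q), t d
      ≤ ∑ q ∈ u'.image Φ, C₀ * h q := Finset.sum_le_sum hfiber
  _ = C₀ * ∑ q ∈ u'.image Φ, h q := by rw [Finset.mul_sum]
  _ ≤ C₀ * ∑' n, h n := by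
        apply mul_le_mul_of_nonneg_left _ hC0nn
        exact Summable.sum_le_tsum _ (fun n _ => hhnn n) hhsum
end
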